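/- arXiv:2306.02376 — 3 statements merged into one kernel-verified Lean document; each statement's English description precedes it below -/
import Mathlib

section
/- Let G be a finite connected non-bipartite undirected graph on vertex set V. For any vertices i, j, x ∈ V and any N₁, N₂ > 0, there exists K such that for all k ≥ K, the number of pairs (p_i, p_j), where p_i is a walk of length k from i to x, p_j is a walk of length k from j to x, and the degree of intersection doi(p_i, p_j) ≥ N₁, is at least N₂. -/
open Finset

variable {V : Type*}

/-- The degree of intersection of two walks (given via their vertex sequences, i.e.
supports): the number of positions `t` (with `1 ≤ t ≤ k`) at which both walks
traverse the same step, i.e. agree at positions `t-1` and `t`.  Here `p.support`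
is the list `(v₀, v₁, …, v_k)` of vertices of the walk `p`. -/
def doi [DecidableEq V] {G : SimpleGraph V} {a b c d : V}
    (p : G.Walk a b) (q : G.Walk c d) : ℕ :=
  ((Finset.range p.length).filter (fun t =>
    p.support.getD t a = q.support.getD t c ∧
    p.support.getD (t + 1) a = q.support.getD (t + 1) c)).card

namespace StmtAux

open SimpleGraph

variable {G : SimpleGraph V} {a b c u v x : V}

lemma support_getD_zero (p : G.Walk a b) (d : V) : p.support.getD 0 d = a := by
  rw [p.support_eq_cons]
  simp

lemma support_getD_length (p : G.Walk a b) (d : V) : p.support.getD p.length d = b := by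
  induction p with
  | nil => simp
  | cons h q ih => simpa [SimpleGraph.Walk.support_cons] using ih

lemma support_getD_append_left (p : G.Walk a b) (q : G.Walk b c) {m : ℕ}
    (hm : m ≤ p.length) (d : V) :
    (p.append q).support.getD m d = p.support.getD m d := by
  rw [SimpleGraph.Walk.support_append, List.getD_append]
  rw [SimpleGraph.Walk.length_support]; omega

lemma support_getD_append_right (p : G.Walk a b) (q : G.Walk b c) {m : ℕ}
    (hm : m ≤ q.length) (d d' : V) :
    (p.append q).support.getD (p.length + m) d = q.support.getD m d' := by
  rw [SimpleGraph.Walk.support_append]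
  cases m with
  | zero =>
    rw [List.getD_append _ _ _ _ (by rw [SimpleGraph.Walk.length_support]; omega)]
    rw [Nat.add_zero, support_getD_length, support_getD_zero]
  | succ m =>
    rw [List.getD_append_right _ _ _ _ (by rw [SimpleGraph.Walk.length_support]; omega)]
    have hidx : p.length + (m + 1) - p.support.length = m := by
      rw [SimpleGraph.Walk.length_support]; omega
    rw [hidx]
    rcases hq : q.support with _ | ⟨h0, t⟩
    · exact absurd hq q.support_ne_nil
    · simp only [List.tail_cons, List.getD_cons_succ]
      have hlt' : m < t.length := by
        have h2 := q.length_support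
        rw [hq] at h2
        simp at h2
        omega
      rw [List.getD_eq_getElem _ _ hlt', List.getD_eq_getElem _ _ hlt']

/-- The zig-zag walk of length `2*n` at `u`, going back and forth along the edge `u v`. -/
def zpow (h : G.Adj u v) : ℕ → G.Walk u u
  | 0 => SimpleGraph.Walk.nil
  | n + 1 => (SimpleGraph.Walk.cons h (SimpleGraph.Walk.cons h.symm SimpleGraph.Walk.nil)).append
      (zpow h n)

lemma length_zpow (h : G.Adj u v) (n : ℕ) : (zpow h n).length = 2 * n := by
  induction n with
  | zero => rfl
  | succ n ih =>
    show ((SimpleGraph.Walk.cons h (SimpleGraph.Walk.cons h.symm SimpleGraph.Walk.nil)).append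
      (zpow h n)).length = 2 * (n + 1)
    rw [SimpleGraph.Walk.length_append, ih]
    simp [SimpleGraph.Walk.length_cons]
    omega

lemma zpow_getD_odd (h : G.Adj u v) (n m : ℕ) (hm : Odd m) (hmn : m ≤ 2 * n) (d : V) :
    (zpow h n).support.getD m d = v := by
  induction n generalizing m with
  | zero => obtain ⟨j, hj⟩ := hm; omega
  | succ n ih =>
    obtain ⟨j, hj⟩ := hm
    show ((SimpleGraph.Walk.cons h (SimpleGraph.Walk.cons h.symm SimpleGraph.Walk.nil)).append
      (zpow h n)).support.getD m d = v
    rcases j with _ | j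
    · have hm1 : m = 1 := by omega
      subst hm1
      rw [support_getD_append_left _ _
        (by simp [SimpleGraph.Walk.length_cons]) d]
      simp [SimpleGraph.Walk.support_cons]
    · have hm2 : m = (SimpleGraph.Walk.cons h (SimpleGraph.Walk.cons h.symm
        (SimpleGraph.Walk.nil : G.Walk u u))).length + (2 * j + 1) := by
        simp [SimpleGraph.Walk.length_cons]; omega
      rw [hm2, support_getD_append_right _ _ (by rw [length_zpow]; omega) d d]
      exact ih (2 * j + 1) ⟨j, by omega⟩ (by omega)

lemma exists_closed_walk (h : G.Adj u v) (C : G.Walk u u) (hC : Odd C.length) :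
    ∀ n, C.length ≤ n → ∃ w : G.Walk u u, w.length = n := by
  intro n hn
  rcases Nat.even_or_odd n with he | ho
  · obtain ⟨e, he⟩ := he
    exact ⟨zpow h (n / 2), by rw [length_zpow]; omega⟩
  · obtain ⟨e, he⟩ := ho
    obtain ⟨a, ha⟩ := hC
    refine ⟨C.append (zpow h ((n - C.length) / 2)), ?_⟩
    rw [SimpleGraph.Walk.length_append, length_zpow]
    omega

lemma exists_walk_length (hconn : G.Connected) (h : G.Adj u v) (C : G.Walk u u)
    (hC : Odd C.length) (a b : V) :
    ∃ K, ∀ n, K ≤ n → ∃ w : G.Walk a b, w.length = n := by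
  obtain ⟨p⟩ := hconn.preconnected a u
  obtain ⟨q⟩ := hconn.preconnected u b
  refine ⟨p.length + q.length + C.length, fun n hn => ?_⟩
  obtain ⟨w, hw⟩ := exists_closed_walk h C hC (n - p.length - q.length) (by omega)
  refine ⟨p.append (w.append q), ?_⟩
  rw [SimpleGraph.Walk.length_append, SimpleGraph.Walk.length_append, hw]
  omega

lemma le_doi [DecidableEq V] {i j : V} (P : G.Walk i u) (Q : G.Walk j u) (T : G.Walk u x)
    (hPQ : P.length = Q.length) : T.length ≤ doi (P.append T) (Q.append T) := by
  unfold doi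
  have hlen : (P.append T).length = P.length + T.length := SimpleGraph.Walk.length_append _ _
  have hsub : Finset.Ico P.length (P.length + T.length) ⊆
      (Finset.range (P.append T).length).filter (fun t =>
        (P.append T).support.getD t i = (Q.append T).support.getD t j ∧
        (P.append T).support.getD (t + 1) i = (Q.append T).support.getD (t + 1) j) := by
    intro t ht
    rw [Finset.mem_Ico] at ht
    obtain ⟨m, hm⟩ : ∃ m, t = P.length + m := ⟨t - P.length, by omega⟩
    have hmlt : m < T.length := by omega
    refine Finset.mem_filter.mpr ⟨Finset.mem_range.mpr (by rw [hlen]; omega), ?_, ?_⟩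
    · have e1 := support_getD_append_right P T (m := m) (by omega) i u
      have e2 := support_getD_append_right Q T (m := m) (by omega) j u
      rw [hm, e1, hPQ, e2]
    · have e1 := support_getD_append_right P T (m := m + 1) (by omega) i u
      have e2 := support_getD_append_right Q T (m := m + 1) (by omega) j u
      have hmt : t + 1 = P.length + (m + 1) := by omega
      rw [hmt, e1, hPQ, e2]
  calc T.length = (Finset.Ico P.length (P.length + T.length)).card := by
        rw [Nat.card_Ico]; omega
    _ ≤ _ := Finset.card_le_card hsub

lemma mid_getD_self [DecidableEq V] (huv : G.Adj v u) (C : G.Walk v v) (W : G.Walk v x)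
    (n : ℕ) (d : V) :
    ((zpow huv n).append ((C.append C).append W)).support.getD (2 * n + C.length) d = v := by
  have e := support_getD_append_right (zpow huv n) ((C.append C).append W)
    (m := C.length) (by rw [SimpleGraph.Walk.length_append, SimpleGraph.Walk.length_append]; omega)
    d v
  rw [length_zpow] at e
  rw [e]
  rw [support_getD_append_left (C.append C) W
    (by rw [SimpleGraph.Walk.length_append]; omega) v]
  rw [support_getD_append_left C C le_rfl v]
  exact support_getD_length C v

lemma mid_getD_other [DecidableEq V] (huv : G.Adj v u) (n m : ℕ) (hodd : Odd m)
    (hmn : m ≤ 2 * n) (W : G.Walk v x) (d : V) :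
    ((zpow huv n).append W).support.getD m d = u := by
  rw [support_getD_append_left _ _ (by rw [length_zpow]; omega) d]
  exact zpow_getD_odd huv n m hodd hmn d

end StmtAux

open StmtAux in
theorem stmt_3 [Fintype V] [DecidableEq V] (G : SimpleGraph V)
    (hconn : G.Connected)
    (hodd : ∃ (v : V) (w : G.Walk v v), Odd w.length)
    (i j x : V) (N₁ N₂ : ℕ) (hN₁ : 0 < N₁) (hN₂ : 0 < N₂) :
    ∃ K : ℕ, ∀ k ≥ K,
      N₂ ≤ {pq : G.Walk i x × G.Walk j x |
              pq.1.length = k ∧ pq.2.length = k ∧ N₁ ≤ doi pq.1 pq.2}.ncard := by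
  classical
  obtain ⟨v, C, hC⟩ := hodd
  cases C with
  | nil => simp at hC
  | cons huv C0 =>
    rename_i u
    set C : G.Walk v v := SimpleGraph.Walk.cons huv C0 with hCdef
    clear_value C
    clear hCdef
    have hL1 : 1 ≤ C.length := by obtain ⟨e, he⟩ := hC; omega
    obtain ⟨R⟩ := hconn.preconnected v x
    set S : G.Walk v x := (zpow huv N₁).append R with hSdef
    have hS : N₁ ≤ S.length := by
      rw [hSdef, SimpleGraph.Walk.length_append, length_zpow]; omega
    obtain ⟨Ki, hKi⟩ := exists_walk_length hconn huv C hC i v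
    obtain ⟨Kj, hKj⟩ := exists_walk_length hconn huv C hC j v
    set M : ℕ := 2 * C.length * N₂ with hMdef
    refine ⟨Ki + Kj + M + S.length, fun k hk => ?_⟩
    obtain ⟨P, hP⟩ := hKi (k - M - S.length) (by omega)
    obtain ⟨Q, hQ⟩ := hKj (k - M - S.length) (by omega)
    have hPQ : P.length = Q.length := by rw [hP, hQ]
    set T : ℕ → G.Walk v x := fun s =>
      (zpow huv (C.length * s)).append ((C.append C).append
        ((zpow huv (C.length * (N₂ - 1 - s))).append S)) with hTdef
    have hTlen : ∀ s, s < N₂ → (T s).length = M + S.length := by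
      intro s hs
      show ((zpow huv (C.length * s)).append ((C.append C).append
        ((zpow huv (C.length * (N₂ - 1 - s))).append S))).length = M + S.length
      simp only [SimpleGraph.Walk.length_append, length_zpow]
      obtain ⟨t, ht⟩ : ∃ t, N₂ - 1 - s = t := ⟨_, rfl⟩
      have hN : N₂ = s + 1 + t := by omega
      rw [ht, hMdef, hN]
      ring
    set f : ℕ → G.Walk i x × G.Walk j x := fun s => (P.append (T s), Q.append (T s)) with hfdef
    -- membership
    have hmem : ∀ s, s < N₂ → f s ∈ {pq : G.Walk i x × G.Walk j x |
        pq.1.length = k ∧ pq.2.length = k ∧ N₁ ≤ doi pq.1 pq.2} := by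
      intro s hs
      have hTl := hTlen s hs
      refine ⟨?_, ?_, ?_⟩
      · show (P.append (T s)).length = k
        rw [SimpleGraph.Walk.length_append, hP, hTl]; omega
      · show (Q.append (T s)).length = k
        rw [SimpleGraph.Walk.length_append, hQ, hTl]; omega
      · show N₁ ≤ doi (P.append (T s)) (Q.append (T s))
        calc N₁ ≤ S.length := hS
          _ ≤ (T s).length := by rw [hTl]; omega
          _ ≤ _ := le_doi P Q (T s) hPQ
    -- key index computations
    have hT_self : ∀ s, s < N₂ →
        (T s).support.getD (2 * C.length * s + C.length) v = v := by
      intro s hs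
      have := mid_getD_self huv C ((zpow huv (C.length * (N₂ - 1 - s))).append S)
        (C.length * s) v
      rw [show 2 * C.length * s + C.length = 2 * (C.length * s) + C.length from by ring]
      exact this
    have hT_other : ∀ s s', s < s' → s' < N₂ →
        (T s').support.getD (2 * C.length * s + C.length) v = u := by
      intro s s' hss' hs'
      have hodd' : Odd (2 * C.length * s + C.length) := by
        obtain ⟨e, he⟩ := hC
        exact ⟨C.length * s + e, by rw [he]; ring⟩
      have hmul : C.length * (s + 1) ≤ C.length * s' := Nat.mul_le_mul_left _ hss'
      have hle : 2 * C.length * s + C.length ≤ 2 * (C.length * s') := by nlinarith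
      exact mid_getD_other huv (C.length * s') (2 * C.length * s + C.length) hodd' hle
        ((C.append C).append ((zpow huv (C.length * (N₂ - 1 - s'))).append S)) v
    -- injectivity
    have hpair : ∀ s s', s < s' → s' < N₂ → f s ≠ f s' := by
      intro s s' hss' hs' heq
      have hs : s < N₂ := lt_trans hss' hs'
      have h1 : P.append (T s) = P.append (T s') := congrArg Prod.fst heq
      have h2 := congrArg
        (fun w : G.Walk i x => w.support.getD (P.length + (2 * C.length * s + C.length)) i) h1
      have hmsle : 2 * C.length * s + C.length ≤ M + S.length := by
        rw [hMdef]
        have hmul : C.length * (s + 1) ≤ C.length * N₂ := Nat.mul_le_mul_left _ (by omega)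
        nlinarith [Nat.zero_le S.length]
      have e1 := support_getD_append_right P (T s)
        (m := 2 * C.length * s + C.length) (by rw [hTlen s hs]; omega) i v
      have e2 := support_getD_append_right P (T s')
        (m := 2 * C.length * s + C.length) (by rw [hTlen s' hs']; omega) i v
      rw [e1, e2] at h2
      rw [hT_self s hs, hT_other s s' hss' hs'] at h2
      exact huv.ne' h2.symm
    have hinj : Set.InjOn f ↑(Finset.range N₂) := by
      intro s hs s' hs' heq
      simp only [Finset.coe_range, Set.mem_Iio] at hs hs'
      rcases lt_trichotomy s s' with h | h | h
      · exact absurd heq (hpair s s' h hs')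
      · exact h
      · exact absurd heq.symm (hpair s' s h hs)
    -- finiteness
    have hfin : {pq : G.Walk i x × G.Walk j x |
        pq.1.length = k ∧ pq.2.length = k ∧ N₁ ≤ doi pq.1 pq.2}.Finite := by
      apply Set.Finite.subset
        (((G.finsetWalkLength k i x) ×ˢ (G.finsetWalkLength k j x)).finite_toSet)
      rintro ⟨p, q⟩ ⟨h1, h2, -⟩
      simp only [Finset.coe_product, Set.mem_prod, Finset.mem_coe,
        SimpleGraph.mem_finsetWalkLength_iff]
      exact ⟨h1, h2⟩
    calc N₂ = (Finset.range N₂).card := (Finset.card_range N₂).symm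
      _ = (↑(Finset.range N₂) : Set ℕ).ncard := (Set.ncard_coe_finset _).symm
      _ = (f '' ↑(Finset.range N₂)).ncard := (Set.ncard_image_of_injOn hinj).symm
      _ ≤ _ := by
          apply Set.ncard_le_ncard _ hfin
          rintro _ ⟨s, hs, rfl⟩
          simp only [Finset.coe_range, Set.mem_Iio] at hs
          exact hmem s hs
end

section
/- Let G be a finite connected non-bipartite graph, and let T^{(k)} = Ã^k be the k-th power of the symmetrically normalized adjacency matrix with self-loops. Then lim_{k→∞} S(T^{(k)}) = 0, where S is the pairwise row-normalized ℓ¹ smoothness score. -/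
/-!
With `π i = √(deg i + 1)` and `P = (D + I)⁻¹ (A + I)`, the matrix `Ã` is the similarity transform
`D^{1/2} P D^{-1/2}`. `P` is a stochastic matrix with stationary distribution proportional to
`deg + 1`, and it is primitive because `G` is connected and every vertex carries a self-loop.
Doeblin's contraction of the oscillation of columns gives `P ^ k → 𝟙 μᵀ`, hence
`Ã ^ k → π πᵀ / ‖π‖²`. All rows of this limit are positive multiples of `π`, so their
`ℓ¹`-normalizations coincide, and `S` is continuous there and vanishes.
-/

open Finset Filter

noncomputable def l1norm {n : ℕ} (v : Fin n → ℝ) : ℝ := ∑ j, |v j|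

noncomputable def normRow {n : ℕ} (T : Matrix (Fin n) (Fin n) ℝ) (i : Fin n) : Fin n → ℝ :=
  (l1norm (T i))⁻¹ • T i

noncomputable def smoothS {n : ℕ} (T : Matrix (Fin n) (Fin n) ℝ) : ℝ :=
  (∑ i, ∑ j, if i < j then l1norm (normRow T i - normRow T j) else 0) / (n.choose 2)

open Matrix

namespace Matrix

variable {ι : Type*} [Fintype ι] [DecidableEq ι]

lemma card_mul_le_one_of_le_apply {Q : Matrix ι ι ℝ} (hQ : Q ∈ rowStochastic ℝ ι) {ε : ℝ}
    (hε : ∀ i j, ε ≤ Q i j) (i : ι) : Fintype.card ι * ε ≤ 1 := by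
  simpa [← sum_row_of_mem_rowStochastic hQ i] using
    sum_le_sum fun j (_ : j ∈ univ) => hε i j

/-- Doeblin's bound: two rows of `Q` share mass at least `card ι * ε`, which cancels in the
difference. -/
lemma mulVec_sub_mulVec_le_of_le_apply {Q : Matrix ι ι ℝ} (hQ : Q ∈ rowStochastic ℝ ι)
    {ε : ℝ} (hε : ∀ i j, ε ≤ Q i j) {v : ι → ℝ} {a b : ℝ} (hv : ∀ j, a ≤ v j ∧ v j ≤ b)
    (i i' : ι) : (Q *ᵥ v) i - (Q *ᵥ v) i' ≤ (1 - Fintype.card ι * ε) * (b - a) := by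
  set c : ι → ℝ := fun j => min (Q i j) (Q i' j)
  have hmass : Fintype.card ι * ε ≤ ∑ j, c j := by
    simpa using sum_le_sum fun j (_ : j ∈ univ) => le_min (hε i j) (hε i' j)
  have hupper : ∑ j, (Q i j - c j) * v j ≤ ∑ j, (Q i j - c j) * b :=
    sum_le_sum fun j _ => mul_le_mul_of_nonneg_left (hv j).2 (sub_nonneg.2 (min_le_left _ _))
  have hlower : ∑ j, (Q i' j - c j) * a ≤ ∑ j, (Q i' j - c j) * v j :=
    sum_le_sum fun j _ => mul_le_mul_of_nonneg_left (hv j).1 (sub_nonneg.2 (min_le_right _ _))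
  have hrow := sum_row_of_mem_rowStochastic hQ
  calc (Q *ᵥ v) i - (Q *ᵥ v) i'
      = ∑ j, (Q i j - c j) * v j - ∑ j, (Q i' j - c j) * v j := by
        simp only [mulVec, dotProduct, sub_mul, sum_sub_distrib]; ring
    _ ≤ ∑ j, (Q i j - c j) * b - ∑ j, (Q i' j - c j) * a := sub_le_sub hupper hlower
    _ = (1 - ∑ j, c j) * (b - a) := by simp only [← sum_mul, sum_sub_distrib, hrow]; ring
    _ ≤ (1 - Fintype.card ι * ε) * (b - a) :=
        mul_le_mul_of_nonneg_right (by linarith) (sub_nonneg.2 ((hv i).1.trans (hv i).2))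

lemma pow_apply_sub_pow_apply_le {P : Matrix ι ι ℝ} (hP : P ∈ rowStochastic ℝ ι) {m : ℕ}
    {ε : ℝ} (hε : ∀ i j, ε ≤ (P ^ m) i j) (k : ℕ) (i i' j : ι) :
    (P ^ k) i j - (P ^ k) i' j ≤ (1 - Fintype.card ι * ε) ^ (k / m) := by
  have hc : 0 ≤ 1 - Fintype.card ι * ε :=
    sub_nonneg.2 (card_mul_le_one_of_le_apply (pow_mem hP m) hε i)
  suffices h : ∀ q r i i', (P ^ (m * q + r)) i j - (P ^ (m * q + r)) i' j
      ≤ (1 - Fintype.card ι * ε) ^ q by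
    simpa only [Nat.div_add_mod] using h (k / m) (k % m) i i'
  intro q
  induction q with
  | zero =>
    intro r i i'
    have := le_one_of_mem_rowStochastic (pow_mem hP r) (i := i) (j := j)
    have := nonneg_of_mem_rowStochastic (pow_mem hP r) (i := i') (j := j)
    simp only [mul_zero, zero_add, pow_zero]
    linarith
  | succ q ih =>
    intro r i i'
    set v : ι → ℝ := fun l => (P ^ (m * q + r)) l j
    have : Nonempty ι := ⟨i⟩
    obtain ⟨jmax, hmax⟩ := Finite.exists_max v
    obtain ⟨jmin, hmin⟩ := Finite.exists_min v
    calc (P ^ (m * (q + 1) + r)) i j - (P ^ (m * (q + 1) + r)) i' j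
        = (P ^ m *ᵥ v) i - (P ^ m *ᵥ v) i' := by
          rw [show m * (q + 1) + r = m + (m * q + r) by ring, pow_add]; rfl
      _ ≤ (1 - Fintype.card ι * ε) * (v jmax - v jmin) :=
          mulVec_sub_mulVec_le_of_le_apply (pow_mem hP m) hε (fun l => ⟨hmin l, hmax l⟩) i i'
      _ ≤ (1 - Fintype.card ι * ε) * (1 - Fintype.card ι * ε) ^ q :=
          mul_le_mul_of_nonneg_left (ih r jmax jmin) hc
      _ = (1 - Fintype.card ι * ε) ^ (q + 1) := by ring

lemma vecMul_pow_eq_self {P : Matrix ι ι ℝ} {μ : ι → ℝ} (hμ : μ ᵥ* P = μ) (k : ℕ) :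
    μ ᵥ* P ^ k = μ := by
  induction k with
  | zero => simp
  | succ k ih => rw [pow_succ, ← vecMul_vecMul, ih, hμ]

lemma abs_pow_apply_sub_le {P : Matrix ι ι ℝ} (hP : P ∈ rowStochastic ℝ ι) {μ : ι → ℝ}
    (hμ0 : ∀ i, 0 ≤ μ i) (hμ1 : ∑ i, μ i = 1) (hμ : μ ᵥ* P = μ) {m : ℕ} {ε : ℝ}
    (hε : ∀ i j, ε ≤ (P ^ m) i j) (k : ℕ) (i j : ι) :
    |(P ^ k) i j - μ j| ≤ (1 - Fintype.card ι * ε) ^ (k / m) := by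
  set c := (1 - Fintype.card ι * ε) ^ (k / m)
  have hμj : μ j = ∑ i', μ i' * (P ^ k) i' j := (congrFun (vecMul_pow_eq_self hμ k) j).symm
  have hc : c = ∑ i', μ i' * c := by rw [← sum_mul, hμ1, one_mul]
  rw [abs_sub_le_iff]
  constructor
  · calc (P ^ k) i j - μ j = ∑ i', μ i' * ((P ^ k) i j - (P ^ k) i' j) := by
          simp only [hμj, mul_sub, sum_sub_distrib, ← sum_mul, hμ1, one_mul]
      _ ≤ c := hc ▸ sum_le_sum fun i' _ => mul_le_mul_of_nonneg_left
          (pow_apply_sub_pow_apply_le hP hε k i i' j) (hμ0 i')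
  · calc μ j - (P ^ k) i j = ∑ i', μ i' * ((P ^ k) i' j - (P ^ k) i j) := by
          simp only [hμj, mul_sub, sum_sub_distrib, ← sum_mul, hμ1, one_mul]
      _ ≤ c := hc ▸ sum_le_sum fun i' _ => mul_le_mul_of_nonneg_left
          (pow_apply_sub_pow_apply_le hP hε k i' i j) (hμ0 i')

theorem IsPrimitive.tendsto_pow_apply {P : Matrix ι ι ℝ} (hP : P ∈ rowStochastic ℝ ι)
    (hprim : P.IsPrimitive) {μ : ι → ℝ} (hμ0 : ∀ i, 0 ≤ μ i) (hμ1 : ∑ i, μ i = 1)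
    (hμ : μ ᵥ* P = μ) (i j : ι) : Tendsto (fun k => (P ^ k) i j) atTop (nhds (μ j)) := by
  have : Nonempty ι := ⟨i⟩
  obtain ⟨-, m, hm, hpos⟩ := hprim
  obtain ⟨⟨a, b⟩, hmin⟩ := Finite.exists_min fun p : ι × ι => (P ^ m) p.1 p.2
  have hε : ∀ i j, (P ^ m) a b ≤ (P ^ m) i j := fun i j => hmin (i, j)
  have hc0 : 0 ≤ 1 - Fintype.card ι * (P ^ m) a b :=
    sub_nonneg.2 (card_mul_le_one_of_le_apply (pow_mem hP m) hε i)
  have hc1 : 1 - Fintype.card ι * (P ^ m) a b < 1 := by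
    have : (0 : ℝ) < Fintype.card ι := by exact_mod_cast Fintype.card_pos_iff.2 ⟨i⟩
    nlinarith [hpos a b]
  have hgeom := (tendsto_pow_atTop_nhds_zero_of_lt_one hc0 hc1).comp
    (Nat.tendsto_div_const_atTop hm.ne')
  rw [tendsto_iff_norm_sub_tendsto_zero]
  exact squeeze_zero (fun k => norm_nonneg _) (abs_pow_apply_sub_le hP hμ0 hμ1 hμ hε · i j)
    hgeom

lemma pow_apply_pos_of_le {P : Matrix ι ι ℝ} (hP : ∀ i j, 0 ≤ P i j) (hdiag : ∀ i, 0 < P i i)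
    {k k' : ℕ} (hk : k ≤ k') {a b : ι} (h : 0 < (P ^ k) a b) : 0 < (P ^ k') a b := by
  induction k', hk using Nat.le_induction with
  | base => exact h
  | succ k' _ ih =>
    rw [pow_succ, mul_apply]
    exact (mul_pos ih (hdiag b)).trans_le <| single_le_sum
      (fun l _ => mul_nonneg (pow_apply_nonneg hP k' a l) (hP l b)) (mem_univ b)

lemma pow_apply_mul_eq_of_apply_mul_eq {R : Type*} [CommSemiring R] {A P : Matrix ι ι R}
    {s : ι → R} (h : ∀ i j, A i j * s j = s i * P i j) (k : ℕ) (i j : ι) :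
    (A ^ k) i j * s j = s i * (P ^ k) i j := by
  have hconj : SemiconjBy (diagonal s) P A := by
    ext i j
    simp [diagonal_mul, mul_diagonal, h]
  simpa [diagonal_mul, mul_diagonal] using congrFun₂ (hconj.pow_right k).eq.symm i j

lemma pow_apply_pos_of_walk {V : Type*} [Fintype V] [DecidableEq V] {G : SimpleGraph V}
    {P : Matrix V V ℝ} (hP : ∀ i j, 0 ≤ P i j) (hadj : ∀ i j, G.Adj i j → 0 < P i j)
    {a b : V} (w : G.Walk a b) : 0 < (P ^ w.length) a b := by
  induction w with
  | nil => simp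
  | @cons u v _ h w ih =>
    rw [SimpleGraph.Walk.length_cons, pow_succ', mul_apply]
    exact (mul_pos (hadj u v h) ih).trans_le <| single_le_sum
      (fun l _ => mul_nonneg (hP u l) (pow_apply_nonneg hP _ l _)) (mem_univ v)

/-- Walks of length at most the diameter are padded with loops to length `diam + 1`. -/
lemma isPrimitive_of_connected {V : Type*} [Fintype V] [DecidableEq V] {G : SimpleGraph V}
    (hG : G.Connected) {P : Matrix V V ℝ} (hP : ∀ i j, 0 ≤ P i j) (hdiag : ∀ i, 0 < P i i)
    (hadj : ∀ i j, G.Adj i j → 0 < P i j) : P.IsPrimitive := by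
  have : Nonempty V := hG.nonempty
  refine ⟨hP, G.diam + 1, G.diam.succ_pos, fun i j => ?_⟩
  obtain ⟨w, hw⟩ := hG.exists_walk_length_eq_dist i j
  refine pow_apply_pos_of_le hP hdiag ?_ (pow_apply_pos_of_walk hP hadj w)
  rw [hw]
  exact (G.dist_le_diam (G.connected_iff_ediam_ne_top.1 hG)).trans G.diam.le_succ

end Matrix

namespace SimpleGraph

variable {V : Type*} [Fintype V] [DecidableEq V] (G : SimpleGraph V) [DecidableRel G.Adj]

/-- `(D + I)⁻¹ (A + I)`, the random walk on `G` with a self-loop at every vertex. -/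
noncomputable def loopedWalkMatrix : Matrix V V ℝ :=
  of fun i j => (G.adjMatrix ℝ + 1) i j / (G.degree i + 1)

/-- `Ã = (D + I)^{-1/2} (A + I) (D + I)^{-1/2}`. -/
noncomputable def renormalizedAdjMatrix : Matrix V V ℝ :=
  of fun i j =>
    (G.adjMatrix ℝ + 1) i j / (√(G.degree i + 1) * √(G.degree j + 1))

lemma sum_adjMatrix_add_one_apply (i : V) :
    ∑ j, (G.adjMatrix ℝ + 1) i j = G.degree i + 1 := by
  simp [Matrix.add_apply, sum_add_distrib, one_apply, ← neighborFinset_eq_filter]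

lemma loopedWalkMatrix_mem_rowStochastic : G.loopedWalkMatrix ∈ rowStochastic ℝ V := by
  refine mem_rowStochastic_iff_sum.2 ⟨fun i j => ?_, fun i => ?_⟩
  · refine div_nonneg ?_ (by positivity)
    simp only [Matrix.add_apply, adjMatrix_apply, one_apply]
    positivity
  · simp only [loopedWalkMatrix, of_apply, ← sum_div, sum_adjMatrix_add_one_apply]
    exact div_self (by positivity)

lemma vecMul_loopedWalkMatrix :
    (fun i => (G.degree i + 1 : ℝ)) ᵥ* G.loopedWalkMatrix = fun i => (G.degree i + 1 : ℝ) := by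
  funext j
  have hsymm : ∀ i, (G.adjMatrix ℝ + 1) i j = (G.adjMatrix ℝ + 1) j i := fun i => by
    rw [← transpose_apply (G.adjMatrix ℝ + 1), transpose_add, transpose_adjMatrix,
      transpose_one]
  simp only [vecMul, dotProduct, loopedWalkMatrix, of_apply,
    mul_div_cancel₀ _ (by positivity : (G.degree _ + 1 : ℝ) ≠ 0), hsymm,
    sum_adjMatrix_add_one_apply]

lemma loopedWalkMatrix_isPrimitive (hG : G.Connected) : G.loopedWalkMatrix.IsPrimitive := by
  refine isPrimitive_of_connected hG
    (fun _ _ => nonneg_of_mem_rowStochastic G.loopedWalkMatrix_mem_rowStochastic)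
    (fun i => div_pos ?_ (by positivity)) (fun i j h => div_pos ?_ (by positivity))
  · simp [Matrix.add_apply]
  · simp [Matrix.add_apply, h, h.ne]

theorem tendsto_pow_loopedWalkMatrix (hG : G.Connected) (i j : V) :
    Tendsto (fun k => (G.loopedWalkMatrix ^ k) i j) atTop
      (nhds ((G.degree j + 1) / ∑ l, (G.degree l + 1 : ℝ))) := by
  set d : V → ℝ := fun l => G.degree l + 1
  have hd : 0 < ∑ l, d l := sum_pos (fun l _ => by positivity) ⟨i, mem_univ i⟩
  have hμ : (fun l => d l / ∑ l, d l) ᵥ* G.loopedWalkMatrix = fun l => d l / ∑ l, d l := by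
    simp only [div_eq_inv_mul, ← smul_eq_mul, ← Pi.smul_def, smul_vecMul, d,
      G.vecMul_loopedWalkMatrix]
  exact (G.loopedWalkMatrix_isPrimitive hG).tendsto_pow_apply
    G.loopedWalkMatrix_mem_rowStochastic (fun l => by positivity)
    (by rw [← sum_div, div_self hd.ne']) hμ i j

lemma renormalizedAdjMatrix_apply_mul_sqrt (i j : V) :
    G.renormalizedAdjMatrix i j * √(G.degree j + 1)
      = √(G.degree i + 1) * G.loopedWalkMatrix i j := by
  simp only [renormalizedAdjMatrix, loopedWalkMatrix, of_apply]
  field_simp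
  rw [Real.sq_sqrt (by positivity)]

theorem tendsto_pow_renormalizedAdjMatrix (hG : G.Connected) (i j : V) :
    Tendsto (fun k => (G.renormalizedAdjMatrix ^ k) i j) atTop
      (nhds (√(G.degree i + 1) * √(G.degree j + 1) / ∑ l, (G.degree l + 1 : ℝ))) := by
  have hsq : √(G.degree j + 1 : ℝ) ^ 2 = G.degree j + 1 := Real.sq_sqrt (by positivity)
  have hpos : 0 < √(G.degree j + 1 : ℝ) := Real.sqrt_pos.2 (by positivity)
  have hpow : ∀ k, (G.renormalizedAdjMatrix ^ k) i j
      = √(G.degree i + 1) * (G.loopedWalkMatrix ^ k) i j / √(G.degree j + 1) := fun k => by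
    rw [eq_div_iff hpos.ne',
      pow_apply_mul_eq_of_apply_mul_eq G.renormalizedAdjMatrix_apply_mul_sqrt]
  convert ((G.tendsto_pow_loopedWalkMatrix hG i j).const_mul _).div_const _ using 2
  · exact hpow _
  · field_simp
    rw [hsq]

end SimpleGraph

lemma continuous_l1norm {n : ℕ} : Continuous (l1norm : (Fin n → ℝ) → ℝ) := by
  unfold l1norm
  fun_prop

lemma l1norm_smul {n : ℕ} (c : ℝ) (v : Fin n → ℝ) : l1norm (c • v) = |c| * l1norm v := by
  simp [l1norm, abs_mul, mul_sum]

lemma normRow_of_mul {n : ℕ} {c : Fin n → ℝ} {i : Fin n} (hc : 0 < c i) (v : Fin n → ℝ) :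
    normRow (of fun i j => c i * v j) i = (l1norm v)⁻¹ • v := by
  have hrow : (of fun i j => c i * v j) i = c i • v := rfl
  rw [normRow, hrow, l1norm_smul, abs_of_pos hc, smul_smul, mul_inv, mul_comm (c i)⁻¹,
    mul_assoc, inv_mul_cancel₀ hc.ne', mul_one]

lemma tendsto_smoothS_zero {n : ℕ} {T : ℕ → Matrix (Fin n) (Fin n) ℝ}
    {L : Matrix (Fin n) (Fin n) ℝ}
    (hT : ∀ i j, Tendsto (fun k => T k i j) atTop (nhds (L i j))) (hL : ∀ i, l1norm (L i) ≠ 0)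
    (hrows : ∀ i j, normRow L i = normRow L j) :
    Tendsto (fun k => smoothS (T k)) atTop (nhds 0) := by
  have hrow : ∀ i, Tendsto (fun k => normRow (T k) i) atTop (nhds (normRow L i)) := fun i => by
    have hTi : Tendsto (fun k => T k i) atTop (nhds (L i)) := tendsto_pi_nhds.2 (hT i)
    exact (((continuous_l1norm.tendsto _).comp hTi).inv₀ (hL i)).smul hTi
  have hterm : ∀ i j, Tendsto (fun k => if i < j then
      l1norm (normRow (T k) i - normRow (T k) j) else 0) atTop (nhds 0) := fun i j => by
    have h := (continuous_l1norm.tendsto _).comp ((hrow i).sub (hrow j))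
    rw [hrows i j, sub_self, show l1norm (0 : Fin n → ℝ) = 0 by simp [l1norm]] at h
    split_ifs
    exacts [h, tendsto_const_nhds]
  have hsum := tendsto_finsetSum univ fun i (_ : i ∈ univ) =>
    tendsto_finsetSum univ fun j (_ : j ∈ univ) => hterm i j
  simpa [smoothS] using hsum.div_const (n.choose 2 : ℝ)

theorem tendsto_smoothS_zero_of_tendsto_mul {n : ℕ} {T : ℕ → Matrix (Fin n) (Fin n) ℝ}
    {c v : Fin n → ℝ} (hT : ∀ i j, Tendsto (fun k => T k i j) atTop (nhds (c i * v j)))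
    (hc : ∀ i, 0 < c i) (hv : l1norm v ≠ 0) :
    Tendsto (fun k => smoothS (T k)) atTop (nhds 0) := by
  refine tendsto_smoothS_zero (L := of fun i j => c i * v j) hT (fun i => ?_)
    fun i j => by rw [normRow_of_mul (hc i), normRow_of_mul (hc j)]
  change l1norm (c i • v) ≠ 0
  rw [l1norm_smul, abs_of_pos (hc i)]
  exact mul_ne_zero (hc i).ne' hv

theorem stmt_6_general {n : ℕ} (G : SimpleGraph (Fin n)) [DecidableRel G.Adj]
    (hconn : G.Connected) :
    let π : Fin n → ℝ := fun i => Real.sqrt (G.degree i + 1)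
    let Atil : Matrix (Fin n) (Fin n) ℝ := Matrix.of fun i j =>
      (((if G.Adj i j then 1 else 0) + (if i = j then 1 else 0) : ℝ)) / (π i * π j)
    Tendsto (fun k => smoothS (Atil ^ k)) atTop (nhds 0) := by
  intro π Atil
  obtain ⟨i₀⟩ := hconn.nonempty
  have hAtil : Atil = G.renormalizedAdjMatrix := by
    ext i j
    simp [Atil, π, SimpleGraph.renormalizedAdjMatrix, SimpleGraph.adjMatrix_apply, one_apply]
  have hZ : 0 < ∑ l, (G.degree l + 1 : ℝ) :=
    sum_pos (fun l _ => by positivity) ⟨i₀, mem_univ i₀⟩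
  have hπ : ∀ i, 0 < π i := fun i => Real.sqrt_pos.2 (by positivity)
  refine tendsto_smoothS_zero_of_tendsto_mul (c := fun i => π i / ∑ l, (G.degree l + 1 : ℝ))
    (v := π) (fun i j => ?_) (fun i => div_pos (hπ i) hZ) ?_
  · simpa only [hAtil, div_mul_eq_mul_div] using G.tendsto_pow_renormalizedAdjMatrix hconn i j
  · exact (sum_pos (fun l _ => abs_pos.2 (hπ l).ne') ⟨i₀, mem_univ i₀⟩).ne'

theorem stmt_6 {n : ℕ} (G : SimpleGraph (Fin n)) [DecidableRel G.Adj]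
    (hconn : G.Connected)
    (hodd : ∃ (v : Fin n) (w : G.Walk v v), Odd w.length) :
    let π : Fin n → ℝ := fun i => Real.sqrt (G.degree i + 1)
    let Atil : Matrix (Fin n) (Fin n) ℝ := Matrix.of fun i j =>
      (((if G.Adj i j then 1 else 0) + (if i = j then 1 else 0) : ℝ)) / (π i * π j)
    Tendsto (fun k => smoothS (Atil ^ k)) atTop (nhds 0) :=
  stmt_6_general G hconn
end

section
/- Let G be a finite graph where every vertex has degree at least 1, and suppose per-layer attention matrices satisfy |α^{(ℓ)}_{ij}| ≤ c/√(d_i d_j) for all edges (i,j) and all ℓ, where 0 < c < 1 is a fixed constant (coming from a tanh-bounded pre-attention). Let T^{(k)}_{ij} = Σ over walks (j = v₀,…,v_k = i) of ∏_{ℓ=1}^k α^{(ℓ)}_{v_{ℓ−1} v_ℓ}. If additionally the degree-normalized adjacency matrix P with P_{ij} = 1/√(d_i d_j) on edges has spectral radius at most 1, then |T^{(k)}_{ij}| ≤ c^k and hence lim_{k→∞} T^{(k)}_{ij} = 0 for all i, j. -/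
open Finset Filter

private lemma walkSum_aux {n : ℕ} (M : Matrix (Fin n) (Fin n) ℝ) : ∀ (k : ℕ) (i j : Fin n),
    ∑ v ∈ Finset.univ.filter
        (fun v : Fin (k + 1) → Fin n => v 0 = j ∧ v (Fin.last k) = i),
      ∏ ℓ : Fin k, M (v ℓ.castSucc) (v ℓ.succ) = (M ^ k) j i := by
  intro k
  induction k with
  | zero =>
    intro i j
    rw [Finset.sum_filter]
    rw [Fintype.sum_equiv (Equiv.funUnique (Fin 1) (Fin n)) _
      (fun x : Fin n => if x = j ∧ x = i then (1:ℝ) else 0)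
      (fun v => by
        have : v (Fin.last 0) = v 0 := rfl
        simp [Equiv.funUnique, this])]
    simp only [pow_zero, Matrix.one_apply]
    by_cases h : j = i
    · subst h; simp
    · rw [if_neg h]
      apply Finset.sum_eq_zero
      intro x _
      rw [if_neg]
      rintro ⟨rfl, rfl⟩
      exact h rfl
  | succ k ih =>
    intro i j
    rw [pow_succ', Matrix.mul_apply]
    simp_rw [← ih, Finset.mul_sum, Finset.sum_filter]
    rw [← Fintype.sum_equiv (Fin.consEquiv (fun _ : Fin (k+2) => Fin n))
      (fun p : Fin n × (Fin (k+1) → Fin n) =>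
        if p.1 = j ∧ p.2 (Fin.last k) = i then
          M p.1 (p.2 0) * ∏ ℓ : Fin k, M (p.2 ℓ.castSucc) (p.2 ℓ.succ) else 0)
      _
      (fun p => by
        obtain ⟨x, w⟩ := p
        simp only [Fin.consEquiv_apply]
        have hlast : (Fin.cons x w : Fin (k+2) → Fin n) (Fin.last (k+1)) = w (Fin.last k) := by
          have : Fin.last (k+1) = (Fin.last k).succ := rfl
          rw [this, Fin.cons_succ]
        have hprod : ∏ ℓ : Fin (k+1), M ((Fin.cons x w : Fin (k+2) → Fin n) ℓ.castSucc) ((Fin.cons x w : Fin (k+2) → Fin n) ℓ.succ)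
            = M x (w 0) * ∏ ℓ : Fin k, M (w ℓ.castSucc) (w ℓ.succ) := by
          rw [Fin.prod_univ_succ]
          congr 1
        rw [hlast, Fin.cons_zero, hprod])]
    rw [Fintype.sum_prod_type]
    simp only [ite_and]
    rw [Finset.sum_comm]
    conv_rhs => rw [Finset.sum_comm]
    apply Finset.sum_congr rfl
    intro w _
    rw [Finset.sum_ite_eq' Finset.univ j, Finset.sum_ite_eq Finset.univ (w 0)]
    simp

private lemma pk_bound_aux {n : ℕ} (G : SimpleGraph (Fin n)) [DecidableRel G.Adj]
    (hdeg : ∀ i, 1 ≤ G.degree i)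
    (P : Matrix (Fin n) (Fin n) ℝ)
    (hP : P = Matrix.of fun i j =>
      (if G.Adj i j then 1 else 0) / (Real.sqrt (G.degree i) * Real.sqrt (G.degree j))) :
    ∀ (k : ℕ) (i j : Fin n), 0 ≤ (P ^ k) i j ∧ (P ^ k) i j ≤ 1 := by
  set u : Fin n → ℝ := fun i => Real.sqrt (G.degree i) with hu
  have hupos : ∀ i, 0 < u i := fun i => Real.sqrt_pos.2 (by
    have := hdeg i; positivity)
  have hPnn : ∀ i j, 0 ≤ P i j := by
    intro i j
    rw [hP]
    simp only [Matrix.of_apply]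
    positivity
  have hPu : ∀ i, ∑ j, P i j * u j = u i := by
    intro i
    simp only [hP, Matrix.of_apply]
    have h1 : ∀ j, (if G.Adj i j then (1:ℝ) else 0) / (Real.sqrt (G.degree i) * Real.sqrt (G.degree j)) * u j
        = if G.Adj i j then (Real.sqrt (G.degree i))⁻¹ else 0 := by
      intro j
      by_cases h : G.Adj i j
      · rw [if_pos h, if_pos h]
        have h2 : (0:ℝ) < Real.sqrt (G.degree j) := hupos j
        have h3 : (0:ℝ) < Real.sqrt (G.degree i) := hupos i
        field_simp [hu]
        ring
      · simp [h]
    simp_rw [h1]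
    rw [Finset.sum_ite, Finset.sum_const, Finset.sum_const, smul_zero, add_zero]
    have hcard : (Finset.univ.filter (fun j => G.Adj i j)).card = G.degree i := by
      rw [SimpleGraph.degree, SimpleGraph.neighborFinset_eq_filter]
    rw [hcard, nsmul_eq_mul]
    have h3 : (0:ℝ) ≤ (G.degree i : ℝ) := by positivity
    have h4 := Real.mul_self_sqrt h3
    have h5 := hupos i
    rw [hu] at h5 ⊢
    field_simp
    rw [Real.sq_sqrt h3]
  have hPknn : ∀ k (i j : Fin n), 0 ≤ (P ^ k) i j := by
    intro k
    induction k with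
    | zero => intro i j; simp [Matrix.one_apply]; positivity
    | succ k ih =>
      intro i j
      rw [pow_succ, Matrix.mul_apply]
      exact Finset.sum_nonneg fun m _ => mul_nonneg (ih i m) (hPnn m j)
  have hPku : ∀ k i, ∑ j, (P ^ k) i j * u j = u i := by
    intro k
    induction k with
    | zero => intro i; simp [Matrix.one_apply]
    | succ k ih =>
      intro i
      simp_rw [pow_succ, Matrix.mul_apply, Finset.sum_mul]
      rw [Finset.sum_comm]
      calc ∑ m, ∑ j, (P ^ k) i m * P m j * u j
          = ∑ m, (P ^ k) i m * ∑ j, P m j * u j := by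
            refine Finset.sum_congr rfl fun m _ => ?_
            rw [Finset.mul_sum]
            exact Finset.sum_congr rfl fun x _ => mul_assoc _ _ _
        _ = ∑ m, (P ^ k) i m * u m := by simp_rw [hPu]
        _ = u i := ih i
  have hsymm : ∀ k (i j : Fin n), (P ^ k) i j = (P ^ k) j i := by
    have hPs : P.IsSymm := by
      rw [Matrix.IsSymm, hP]
      ext i j
      simp only [Matrix.transpose_apply, Matrix.of_apply]
      have hadj : G.Adj j i ↔ G.Adj i j := G.adj_comm j i
      rw [if_congr hadj rfl rfl, mul_comm]
    intro k i j
    have : (P ^ k).IsSymm := hPs.pow k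
    conv_lhs => rw [← this]
    rfl
  have hbd : ∀ k (i j : Fin n), (P ^ k) i j * u j ≤ u i := by
    intro k i j
    rw [← hPku k i]
    exact Finset.single_le_sum (fun m _ => mul_nonneg (hPknn k i m) (hupos m).le)
      (Finset.mem_univ j)
  intro k i j
  refine ⟨hPknn k i j, ?_⟩
  have h1 := hbd k i j
  have h2 := hbd k j i
  rw [← hsymm k i j] at h2
  nlinarith [hupos i, hupos j, hPknn k i j, mul_pos (hupos i) (hupos j)]

theorem stmt_9 {n : ℕ} (G : SimpleGraph (Fin n)) [DecidableRel G.Adj]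
    (hdeg : ∀ i, 1 ≤ G.degree i)
    (c : ℝ) (hc0 : 0 < c) (hc1 : c < 1)
    (α : ℕ → Matrix (Fin n) (Fin n) ℝ)
    (hα : ∀ (ℓ : ℕ) (i j : Fin n), G.Adj i j →
      |α ℓ i j| ≤ c / Real.sqrt ((G.degree i : ℝ) * (G.degree j : ℝ)))
    (T : ℕ → Matrix (Fin n) (Fin n) ℝ)
    (hT : ∀ (k : ℕ) (i j : Fin n),
      T k i j =
        ∑ v ∈ Finset.univ.filter
            (fun v : Fin (k + 1) → Fin n => v 0 = j ∧ v (Fin.last k) = i ∧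
              ∀ ℓ : Fin k, G.Adj (v ℓ.castSucc) (v ℓ.succ)),
          ∏ ℓ : Fin k, α (ℓ.1 + 1) (v ℓ.castSucc) (v ℓ.succ))
    (P : Matrix (Fin n) (Fin n) ℝ)
    (hP : P = Matrix.of fun i j =>
      (if G.Adj i j then 1 else 0) / (Real.sqrt (G.degree i) * Real.sqrt (G.degree j)))
    (hspec : ∀ μ : ℝ, Module.End.HasEigenvalue (Matrix.toLin' P) μ → |μ| ≤ 1) :
    ∀ i j : Fin n, (∀ k, |T k i j| ≤ c ^ k) ∧
      Tendsto (fun k => T k i j) atTop (nhds 0) := by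
  have hPnn : ∀ i j, 0 ≤ P i j := by
    intro i j
    rw [hP]
    simp only [Matrix.of_apply]
    positivity
  intro i j
  have key : ∀ k, |T k i j| ≤ c ^ k := by
    intro k
    rw [hT k i j]
    have step1 : |∑ v ∈ Finset.univ.filter
            (fun v : Fin (k + 1) → Fin n => v 0 = j ∧ v (Fin.last k) = i ∧
              ∀ ℓ : Fin k, G.Adj (v ℓ.castSucc) (v ℓ.succ)),
          ∏ ℓ : Fin k, α (ℓ.1 + 1) (v ℓ.castSucc) (v ℓ.succ)|
        ≤ ∑ v ∈ Finset.univ.filter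
            (fun v : Fin (k + 1) → Fin n => v 0 = j ∧ v (Fin.last k) = i ∧
              ∀ ℓ : Fin k, G.Adj (v ℓ.castSucc) (v ℓ.succ)),
          c ^ k * ∏ ℓ : Fin k, P (v ℓ.castSucc) (v ℓ.succ) := by
      refine (Finset.abs_sum_le_sum_abs _ _).trans (Finset.sum_le_sum ?_)
      intro v hv
      rw [Finset.mem_filter] at hv
      obtain ⟨-, -, -, hadj⟩ := hv
      rw [Finset.abs_prod]
      have hterm : ∀ ℓ : Fin k, |α (ℓ.1 + 1) (v ℓ.castSucc) (v ℓ.succ)|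
          ≤ c * P (v ℓ.castSucc) (v ℓ.succ) := by
        intro ℓ
        have h := hα (ℓ.1 + 1) (v ℓ.castSucc) (v ℓ.succ) (hadj ℓ)
        rw [hP]
        simp only [Matrix.of_apply, if_pos (hadj ℓ)]
        have hd1 : (0:ℝ) ≤ (G.degree (v ℓ.castSucc) : ℝ) := by positivity
        rw [Real.sqrt_mul hd1] at h
        calc |α (ℓ.1 + 1) (v ℓ.castSucc) (v ℓ.succ)|
            ≤ c / (Real.sqrt (G.degree (v ℓ.castSucc)) * Real.sqrt (G.degree (v ℓ.succ))) := h
          _ = c * (1 / (Real.sqrt (G.degree (v ℓ.castSucc)) * Real.sqrt (G.degree (v ℓ.succ)))) := by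
              ring
      calc ∏ ℓ : Fin k, |α (ℓ.1 + 1) (v ℓ.castSucc) (v ℓ.succ)|
          ≤ ∏ ℓ : Fin k, c * P (v ℓ.castSucc) (v ℓ.succ) := by
            exact Finset.prod_le_prod (fun ℓ _ => abs_nonneg _) (fun ℓ _ => hterm ℓ)
        _ = c ^ k * ∏ ℓ : Fin k, P (v ℓ.castSucc) (v ℓ.succ) := by
            rw [Finset.prod_mul_distrib, Finset.prod_const, Finset.card_univ,
              Fintype.card_fin]
    refine step1.trans ?_
    rw [← Finset.mul_sum]
    have step2 : ∑ v ∈ Finset.univ.filter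
            (fun v : Fin (k + 1) → Fin n => v 0 = j ∧ v (Fin.last k) = i ∧
              ∀ ℓ : Fin k, G.Adj (v ℓ.castSucc) (v ℓ.succ)),
          ∏ ℓ : Fin k, P (v ℓ.castSucc) (v ℓ.succ)
        = ∑ v ∈ Finset.univ.filter
            (fun v : Fin (k + 1) → Fin n => v 0 = j ∧ v (Fin.last k) = i),
          ∏ ℓ : Fin k, P (v ℓ.castSucc) (v ℓ.succ) := by
      apply Finset.sum_subset
      · intro v hv
        rw [Finset.mem_filter] at hv ⊢
        exact ⟨hv.1, hv.2.1, hv.2.2.1⟩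
      · intro v hv1 hv2
        rw [Finset.mem_filter] at hv1 hv2
        have : ¬ ∀ ℓ : Fin k, G.Adj (v ℓ.castSucc) (v ℓ.succ) := by
          intro h
          exact hv2 ⟨hv1.1, hv1.2.1, hv1.2.2, h⟩
        push_neg at this
        obtain ⟨ℓ, hℓ⟩ := this
        apply Finset.prod_eq_zero (Finset.mem_univ ℓ)
        rw [hP]
        simp [hℓ]
    rw [step2, walkSum_aux P k i j]
    have hb := (pk_bound_aux G hdeg P hP k j i).2
    have hb0 := (pk_bound_aux G hdeg P hP k j i).1
    have hck : (0:ℝ) ≤ c ^ k := by positivity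
    nlinarith
  refine ⟨key, ?_⟩
  apply squeeze_zero_norm (fun k => by simpa [Real.norm_eq_abs] using key k)
  exact tendsto_pow_atTop_nhds_zero_of_lt_one hc0.le hc1
end
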